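/- If π is a nonnesting B_n-partition whose zero block contains 1 and another positive integer i ≠ 1, then 1 is a transient of π, i.e. 1 ∈ tr(π). -/
import Mathlib


open Set Classical
noncomputable section
attribute [local instance] Classical.propDecidable

/-- The ground set `[±n] = {-n, …, -1, 1, …, n}`. -/
def ground (n : ℕ) : Set ℤ := {x | x ≠ 0 ∧ |x| ≤ (n : ℤ)}

/-- `-B`, the negative of a block. -/
def negSet (B : Set ℤ) : Set ℤ := {x | -x ∈ B}

/-- `P` is a set partition of `S`. -/
def IsPartitionOf (P : Set (Set ℤ)) (S : Set ℤ) : Prop :=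
  (∀ B ∈ P, B.Nonempty ∧ B ⊆ S) ∧
  (∀ x ∈ S, ∃ B ∈ P, x ∈ B) ∧
  (∀ B ∈ P, ∀ B' ∈ P, B ≠ B' → Disjoint B B')

/-- A `Bₙ`-partition: a partition of `[±n]` closed under negation with at most one
block fixed by negation. -/
def IsBPartition (n : ℕ) (P : Set (Set ℤ)) : Prop :=
  IsPartitionOf P (ground n) ∧
  (∀ B ∈ P, negSet B ∈ P) ∧
  (∀ B ∈ P, ∀ B' ∈ P, negSet B = B → negSet B' = B' → B = B')

/-- The zero block: a block fixed by negation. -/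
def IsZeroBlock (P : Set (Set ℤ)) (B : Set ℤ) : Prop := B ∈ P ∧ negSet B = B

/-- A `Dₙ`-partition: a `Bₙ`-partition whose zero block, if present, has more
than two elements. -/
def IsDPartition (n : ℕ) (P : Set (Set ℤ)) : Prop :=
  IsBPartition n P ∧ ∀ B, IsZeroBlock P B → 2 < B.ncard

def posOnly (B : Set ℤ) : Prop := ∀ x ∈ B, 0 < x

/-- A block with both positive and negative entries. -/
def mixedB (B : Set ℤ) : Prop := (∃ x ∈ B, 0 < x) ∧ (∃ x ∈ B, x < 0)

/-- Openers: least elements of the blocks consisting of positive integers only. -/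
def opSet (P : Set (Set ℤ)) : Set ℤ := {a | ∃ B ∈ P, posOnly B ∧ IsLeast B a}

/-- Closers: greatest elements of all-positive blocks, together with the absolute
values of the least and greatest elements of mixed-sign blocks. -/
def clSet (P : Set (Set ℤ)) : Set ℤ :=
  {a | ∃ B ∈ P, posOnly B ∧ IsGreatest B a} ∪
  {a | ∃ B ∈ P, mixedB B ∧ ∃ m, (IsLeast B m ∨ IsGreatest B m) ∧ a = |m|}

/-- Transients: the elements of `[n]` which are neither openers nor closers. -/
def trSet (n : ℕ) (P : Set (Set ℤ)) : Set ℤ :=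
  {x : ℤ | 1 ≤ x ∧ x ≤ (n : ℤ)} \ (opSet P ∪ clSet P)

/-- For the nonnesting `Bₙ`-diagram the zero block passes through `0`. -/
def blockWithZero (B : Set ℤ) : Set ℤ := if negSet B = B then insert 0 B else B

/-- An arc of the nonnesting `Bₙ`-diagram of `P` (joining consecutive elements of a
block, with `0` inserted into the zero block), on `-n < ⋯ < -1 < 0 < 1 < ⋯ < n`. -/
def IsArcB (P : Set (Set ℤ)) (a b : ℤ) : Prop :=
  a < b ∧ ∃ B ∈ P, a ∈ blockWithZero B ∧ b ∈ blockWithZero B ∧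
    ∀ c ∈ blockWithZero B, ¬(a < c ∧ c < b)

/-- Nonnesting `Bₙ`-partitions: no two arcs of the diagram are nested. -/
def NNB (n : ℕ) (P : Set (Set ℤ)) : Prop :=
  IsBPartition n P ∧ ∀ a b c d, IsArcB P a b → IsArcB P c d → ¬(a < c ∧ d < b)

/-- The order key for the type `D` ground set `-n < ⋯ < -2 < {-1, 1} < 2 < ⋯ < n`,
in which `1` and `-1` are incomparable. -/
def dkey (x : ℤ) : ℤ := if x = 1 ∨ x = -1 then 0 else x

/-- An arc of the nonnesting `Dₙ`-diagram of `P`. -/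
def IsArcD (P : Set (Set ℤ)) (a b : ℤ) : Prop :=
  dkey a < dkey b ∧ ∃ B ∈ P, a ∈ B ∧ b ∈ B ∧
    ∀ c ∈ B, ¬(dkey a < dkey c ∧ dkey c < dkey b)

/-- Nonnesting `Dₙ`-partitions: `Dₙ`-partitions whose `D`-diagram has no two nested
arcs (arcs with endpoints `1` and `-1` are never nested). -/
def NND (n : ℕ) (P : Set (Set ℤ)) : Prop :=
  IsDPartition n P ∧
  ∀ a b c d, IsArcD P a b → IsArcD P c d → ¬(dkey a < dkey c ∧ dkey d < dkey b)

/-- If the zero block of a nonnesting `Bₙ`-partition contains `1` and another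
positive integer, then `1` is a transient. -/
theorem one_transient_of_zeroBlock (n : ℕ) (P : Set (Set ℤ)) (h : NNB n P)
    (B : Set ℤ) (hB : IsZeroBlock P B) (h1 : (1 : ℤ) ∈ B)
    (i : ℤ) (hi : i ∈ B) (hip : 0 < i) (hne : i ≠ 1) :
    (1 : ℤ) ∈ trSet n P := by
  obtain ⟨hBP, hBneg⟩ := hB
  obtain ⟨⟨⟨hblocks, _, hdisj⟩, _, _⟩, _⟩ := h
  have hneg1 : (-1 : ℤ) ∈ B := by
    have : (1 : ℤ) ∈ negSet B := by rw [hBneg]; exact h1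
    simpa [negSet] using this
  have hnegi : -i ∈ B := by
    have : i ∈ negSet B := by rw [hBneg]; exact hi
    simpa [negSet] using this
  have hi2 : (2 : ℤ) ≤ i := by omega
  have hsub : B ⊆ ground n := (hblocks B hBP).2
  have hn1 : (1 : ℤ) ≤ (n : ℤ) := by
    have := (hsub h1).2; simpa using this
  -- any block containing 1 or -1 equals B
  have key : ∀ B' ∈ P, ∀ x, x ∈ B' → x ∈ B → B' = B := by
    intro B' hB' x hx hxB
    by_contra hne'
    exact (hdisj B' hB' B hBP hne').ne_of_mem hx hxB rfl
  refine ⟨⟨le_refl _, hn1⟩, ?_⟩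
  rintro (⟨B', hB', hpos, hleast⟩ | hcl)
  · have hB'B := key B' hB' 1 hleast.1 h1
    subst hB'B
    exact absurd (hpos _ hneg1) (by norm_num)
  · rcases hcl with ⟨B', hB', hpos, hgr⟩ | ⟨B', hB', _, m, hm, habs⟩
    · have hB'B := key B' hB' 1 hgr.1 h1
      subst hB'B
      exact absurd (hpos _ hneg1) (by norm_num)
    · have hm1 : m = 1 ∨ m = -1 := by
        rcases abs_cases m with ⟨h', _⟩ | ⟨h', _⟩ <;> omega
      have hmB' : m ∈ B' := by rcases hm with h' | h' <;> exact h'.1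
      have hmB : m ∈ B := by rcases hm1 with rfl | rfl <;> assumption
      have hB'B := key B' hB' m hmB' hmB
      subst hB'B
      rcases hm with hle | hge
      · have := hle.2 hnegi; omega
      · have := hge.2 hi; omega
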